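/- Gaussian Berezin integral formula: for a real (or complex) antisymmetric 2n×2n matrix A, the Berezin integral of exp(½ Σ_{ij} θ_i A_{ij} θ_j) over the Grassmann generators θ₁,…,θ_{2n} equals the Pfaffian of A: ∫ exp(½ θᵀAθ) dθ_{2n}⋯dθ₁ = Pf(A). Equivalently, in the exterior algebra Λ(ℂ^{2n}), if a = Σ_{i<j} A_{ij} e_i ∧ e_j, then the coefficient of e₁∧⋯∧e_{2n} in (1/n!) aⁿ equals Pf(A). -/

import Mathlib

/-!
Because the `θ i` anticommute and `2` is invertible, `v ↦ ∑ i, v i • θ i` squares to zero, so it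
extends to the exterior algebra and the products `θ (f 0) * ⋯ * θ (f (k - 1))` are the values of
an alternating map on basis vectors. Hence such a product vanishes unless `f` is injective, is
`± gmonomial θ (range f)` otherwise, and is `sign σ • gmonomial θ univ` when `f = σ` is a
permutation. Expanding `(∑ i, ∑ j, M i j • (θ i * θ j)) ^ k` as a sum over words `f` of length
`2 * k`, the Berezin integral kills every word that misses an index: all of `a ^ k` for `k < n`,
and all words but the permutations for `k = n`, where `σ` contributes
`sign σ * ∏ i, M (σ (2 * i)) (σ (2 * i + 1))`. The factor `(1 / 2) ^ n / n!` of the exponential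
series is the normalisation of the Pfaffian.
-/
open Matrix

/-- The ordered monomial `x_I = x_{i_1} * ... * x_{i_k}` associated with a finite
index set `I = {i_1 < ... < i_k}`. -/
def gmonomial {A : Type*} [Ring A] {m : ℕ} (x : Fin m → A) (I : Finset (Fin m)) : A :=
  ((I.sort (· ≤ ·)).map x).prod

/-- The Pfaffian of a `2n x 2n` matrix, via
`Pf(A) = (1/(2^n n!)) * sum_sigma sgn(sigma) * prod_i A_{sigma(2i), sigma(2i+1)}`. -/
noncomputable def pfaffian {n : ℕ} (A : Matrix (Fin (2 * n)) (Fin (2 * n)) ℂ) : ℂ :=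
  (1 / ((2 : ℂ) ^ n * (n.factorial : ℂ))) *
    ∑ σ : Equiv.Perm (Fin (2 * n)),
      ((Equiv.Perm.sign σ : ℤ) : ℂ) *
        ∏ i : Fin n,
          A (σ ⟨2 * (i : ℕ), by omega⟩) (σ ⟨2 * (i : ℕ) + 1, by omega⟩)


open Finset

theorem Finset.sum_smul_pow {R A ι : Type*} [CommSemiring R] [Semiring A] [Algebra R A]
    [Fintype ι] (c : ι → R) (y : ι → A) (k : ℕ) :
    (∑ p, c p • y p) ^ k = ∑ t : Fin k → ι, (∏ r, c (t r)) • (List.ofFn (y ∘ t)).prod := by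
  rw [← MultilinearMap.mkPiAlgebraFin_apply_const (R := R), MultilinearMap.map_sum]
  simp only [MultilinearMap.map_smul_univ, MultilinearMap.mkPiAlgebraFin_apply]
  rfl

def Fin.consecutivePairsEquiv (α : Type*) (k : ℕ) : (Fin (2 * k) → α) ≃ (Fin k → α × α) where
  toFun f i := (f ⟨2 * i, by omega⟩, f ⟨2 * i + 1, by omega⟩)
  invFun t s := if (s : ℕ) % 2 = 0 then (t ⟨s / 2, by omega⟩).1 else (t ⟨s / 2, by omega⟩).2
  left_inv f := by
    funext s
    dsimp only
    split_ifs <;> congr 1 <;> ext <;> simp <;> omega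
  right_inv t := by
    funext i
    ext <;> simp [Nat.mul_add_div]

theorem List.prod_ofFn_consecutive_pairs {M : Type*} [Monoid M] {k : ℕ} (x : Fin (2 * k) → M) :
    (List.ofFn fun i : Fin k => x ⟨2 * i, by omega⟩ * x ⟨2 * i + 1, by omega⟩).prod =
      (List.ofFn x).prod := by
  rw [List.ofFn_mul', List.prod_flatten, List.map_ofFn]
  simp [Function.comp_def]

theorem sum_sum_smul_mul_pow {R A ι : Type*} [CommSemiring R] [Semiring A] [Algebra R A]
    [Fintype ι] (M : Matrix ι ι R) (θ : ι → A) (k : ℕ) :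
    (∑ i, ∑ j, M i j • (θ i * θ j)) ^ k = ∑ f : Fin (2 * k) → ι,
      (∏ i : Fin k, M (f ⟨2 * i, by omega⟩) (f ⟨2 * i + 1, by omega⟩)) •
        (List.ofFn (θ ∘ f)).prod := by
  rw [← Fintype.sum_prod_type', Finset.sum_smul_pow,
    ← (Fin.consecutivePairsEquiv ι k).sum_comp]
  refine Finset.sum_congr rfl fun f _ => ?_
  rw [← List.prod_ofFn_consecutive_pairs]
  rfl

theorem gmonomial_univ {A : Type*} [Ring A] {m : ℕ} (θ : Fin m → A) :
    gmonomial θ univ = (List.ofFn θ).prod := by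
  rw [gmonomial, Fin.sort_univ, List.ofFn_eq_map]

theorem gmonomial_toFinset_ofFn {A : Type*} [Ring A] {m k : ℕ} (θ : Fin m → A)
    {g : Fin k → Fin m} (hg : StrictMono g) :
    gmonomial θ (List.ofFn g).toFinset = (List.ofFn (θ ∘ g)).prod := by
  rw [gmonomial, (List.toFinset_sort _ (List.nodup_ofFn.mpr hg.injective)).mpr
    (List.pairwise_ofFn.mpr fun _ _ h => (hg h).le), List.map_ofFn]

section Anticommuting

variable {K A ι : Type*} [Field K] [NeZero (2 : K)] [Ring A] [Algebra K A]
  [Fintype ι] {θ : ι → A}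

theorem Fintype.linearCombination_mul_self_eq_zero (hθ : ∀ i j, θ i * θ j = -(θ j * θ i))
    (v : ι → K) : Fintype.linearCombination K θ v * Fintype.linearCombination K θ v = 0 := by
  set x := Fintype.linearCombination K θ v * Fintype.linearCombination K θ v
  have hx : x = -x := by
    simp only [x, Fintype.linearCombination_apply, Finset.sum_mul, Finset.mul_sum,
      smul_mul_smul_comm, ← Finset.sum_neg_distrib]
    rw [Finset.sum_comm]
    refine Finset.sum_congr rfl fun i _ => Finset.sum_congr rfl fun j _ => ?_
    rw [hθ, smul_neg, mul_comm]
  have h2x : (2 : K) • x = 0 := by rw [two_smul]; nth_rewrite 2 [hx]; exact add_neg_cancel x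
  exact (smul_eq_zero.mp h2x).resolve_left two_ne_zero

variable (K) in
noncomputable def grassmannProd (hθ : ∀ i j, θ i * θ j = -(θ j * θ i)) (k : ℕ) :
    (ι → K) [⋀^Fin k]→ₗ[K] A :=
  (ExteriorAlgebra.lift K ⟨_, Fintype.linearCombination_mul_self_eq_zero hθ⟩).toLinearMap
    |>.compAlternatingMap (ExteriorAlgebra.ιMulti K k)

theorem grassmannProd_single [DecidableEq ι] (hθ : ∀ i j, θ i * θ j = -(θ j * θ i)) {k : ℕ}
    (f : Fin k → ι) :
    grassmannProd K hθ k (fun r => Pi.single (f r) 1) = (List.ofFn (θ ∘ f)).prod := by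
  simp [grassmannProd, ExteriorAlgebra.ιMulti_apply, map_list_prod, List.map_ofFn,
    Function.comp_def]

end Anticommuting

section Berezin

variable {K A : Type*} [Field K] [NeZero (2 : K)] [Ring A] [Algebra K A]
  {m : ℕ} {θ : Fin m → A}

theorem prod_ofFn_comp_perm_eq_sign_smul (hθ : ∀ i j, θ i * θ j = -(θ j * θ i))
    (σ : Equiv.Perm (Fin m)) :
    (List.ofFn (θ ∘ σ)).prod = ((Equiv.Perm.sign σ : ℤ) : K) • gmonomial θ univ := by
  have hid := grassmannProd_single (K := K) hθ id
  rw [Function.comp_id] at hid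
  rw [gmonomial_univ, ← grassmannProd_single (K := K) hθ, ← hid, Int.cast_smul_eq_zsmul,
    ← Units.smul_def]
  exact AlternatingMap.map_perm _ (fun r => Pi.single r 1) σ

theorem exists_prod_ofFn_comp_eq_smul_gmonomial (hθ : ∀ i j, θ i * θ j = -(θ j * θ i))
    {k : ℕ} (f : Fin k → Fin m) :
    ∃ c : K, (List.ofFn (θ ∘ f)).prod = c • gmonomial θ (List.ofFn f).toFinset := by
  by_cases hf : Function.Injective f
  · set σ := Tuple.sort f
    have hg : StrictMono (f ∘ σ) :=
      (Tuple.monotone_sort f).strictMono_of_injective (hf.comp σ.injective)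
    have hrange : (List.ofFn (f ∘ σ)).toFinset = (List.ofFn f).toFinset := by
      ext i
      simp only [List.mem_toFinset, List.mem_ofFn, ← Set.mem_range, EquivLike.range_comp]
    refine ⟨((Equiv.Perm.sign σ⁻¹ : ℤ) : K), ?_⟩
    rw [← hrange, gmonomial_toFinset_ofFn θ hg, ← grassmannProd_single (K := K) hθ,
      ← grassmannProd_single (K := K) hθ, Int.cast_smul_eq_zsmul, ← Units.smul_def,
      ← AlternatingMap.map_perm]
    congr 1
    funext r
    simp
  · refine ⟨0, ?_⟩
    rw [zero_smul, ← grassmannProd_single (K := K) hθ]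
    exact AlternatingMap.map_eq_zero_of_not_injective _ _
      fun h => hf fun r s hrs => h (by simp [hrs])

variable {ber : A →ₗ[K] K}

theorem berezin_prod_ofFn_of_not_surjective (hθ : ∀ i j, θ i * θ j = -(θ j * θ i))
    (hber : ∀ (c : K) (I : Finset (Fin m)), ber (c • gmonomial θ I) = if I = univ then c else 0)
    {k : ℕ} {f : Fin k → Fin m} (hf : ¬ Function.Surjective f) :
    ber (List.ofFn (θ ∘ f)).prod = 0 := by
  obtain ⟨c, hc⟩ := exists_prod_ofFn_comp_eq_smul_gmonomial (K := K) hθ f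
  rw [hc, hber, if_neg]
  intro h
  refine hf fun i => ?_
  have hi : i ∈ (List.ofFn f).toFinset := h ▸ mem_univ i
  simpa [List.mem_ofFn] using hi

theorem berezin_prod_ofFn_perm (hθ : ∀ i j, θ i * θ j = -(θ j * θ i))
    (hber : ∀ (c : K) (I : Finset (Fin m)), ber (c • gmonomial θ I) = if I = univ then c else 0)
    (σ : Equiv.Perm (Fin m)) : ber (List.ofFn (θ ∘ σ)).prod = Equiv.Perm.sign σ := by
  rw [prod_ofFn_comp_perm_eq_sign_smul (K := K) hθ, hber, if_pos rfl]

theorem berezin_pow_eq_zero_of_lt (hθ : ∀ i j, θ i * θ j = -(θ j * θ i))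
    (hber : ∀ (c : K) (I : Finset (Fin m)), ber (c • gmonomial θ I) = if I = univ then c else 0)
    (M : Matrix (Fin m) (Fin m) K) {k : ℕ} (hk : 2 * k < m) :
    ber ((∑ i, ∑ j, M i j • (θ i * θ j)) ^ k) = 0 := by
  rw [sum_sum_smul_mul_pow, map_sum]
  refine Finset.sum_eq_zero fun f _ => ?_
  rw [map_smul, berezin_prod_ofFn_of_not_surjective hθ hber, smul_zero]
  intro hf
  have hcard := Fintype.card_le_of_surjective f hf
  simp only [Fintype.card_fin] at hcard
  omega

end Berezin

theorem berezin_pow_half_dim {K A : Type*} [Field K] [NeZero (2 : K)] [Ring A] [Algebra K A]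
    {n : ℕ} {θ : Fin (2 * n) → A} {ber : A →ₗ[K] K} (hθ : ∀ i j, θ i * θ j = -(θ j * θ i))
    (hber : ∀ (c : K) (I : Finset (Fin (2 * n))),
      ber (c • gmonomial θ I) = if I = univ then c else 0)
    (M : Matrix (Fin (2 * n)) (Fin (2 * n)) K) :
    ber ((∑ i, ∑ j, M i j • (θ i * θ j)) ^ n) = ∑ σ : Equiv.Perm (Fin (2 * n)),
      ((Equiv.Perm.sign σ : ℤ) : K) *
        ∏ i : Fin n, M (σ ⟨2 * i, by omega⟩) (σ ⟨2 * i + 1, by omega⟩) := by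
  rw [sum_sum_smul_mul_pow, map_sum]
  refine (Fintype.sum_of_injective (fun σ : Equiv.Perm (Fin (2 * n)) => ⇑σ)
    DFunLike.coe_injective _ _ (fun f hf => ?_) fun σ => ?_).symm
  · rw [map_smul, berezin_prod_ofFn_of_not_surjective hθ hber, smul_zero]
    intro hsurj
    exact hf ⟨Equiv.ofBijective f ⟨Finite.injective_iff_surjective.mpr hsurj, hsurj⟩, rfl⟩
  · rw [map_smul, berezin_prod_ofFn_perm hθ hber, smul_eq_mul, mul_comm]

theorem gaussian_berezin_eq_pfaffian_general
    {A : Type*} [Ring A] [Algebra ℂ A] (n : ℕ)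
    (M : Matrix (Fin (2 * n)) (Fin (2 * n)) ℂ)
    (θ : Fin (2 * n) → A)
    (hθ : ∀ i j, θ i * θ j = -(θ j * θ i))
    (ber : A →ₗ[ℂ] ℂ)
    (hber : ∀ (c : ℂ) (I : Finset (Fin (2 * n))),
      ber (c • gmonomial θ I) = if I = Finset.univ then c else 0)
    (a : A) (ha : a = (1 / 2 : ℂ) • ∑ i, ∑ j, M i j • (θ i * θ j)) :
    ber (∑ k ∈ Finset.range (n + 1), ((k.factorial : ℂ))⁻¹ • a ^ k) = pfaffian M := by
  have hpow (k : ℕ) :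
      ber (a ^ k) = (1 / 2) ^ k * ber ((∑ i, ∑ j, M i j • (θ i * θ j)) ^ k) := by
    rw [ha, smul_pow, map_smul, smul_eq_mul]
  rw [map_sum, sum_eq_single_of_mem n (self_mem_range_succ n) fun k hk hkn => ?_]
  · rw [map_smul, hpow, berezin_pow_half_dim hθ hber, pfaffian, smul_eq_mul, div_pow, one_pow]
    field_simp
  · have hlt : 2 * k < 2 * n := by rw [mem_range] at hk; omega
    rw [map_smul, hpow, berezin_pow_eq_zero_of_lt hθ hber M hlt, mul_zero, smul_zero]

/-- Gaussian Berezin integral formula: for an antisymmetric `2n x 2n` matrix `A`,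
the Berezin integral (extraction of the coefficient of the top monomial
`theta_1 ... theta_{2n}`) of `exp((1/2) theta^T A theta)` equals the Pfaffian of `A`.
Here `theta_1, ..., theta_{2n}` are anticommuting Grassmann generators and the
exponential is the finite exponential series. -/
theorem gaussian_berezin_eq_pfaffian
    {A : Type*} [Ring A] [Algebra ℂ A] (n : ℕ)
    (M : Matrix (Fin (2 * n)) (Fin (2 * n)) ℂ) (hM : Mᵀ = -M)
    (θ : Fin (2 * n) → A)
    (hθ : ∀ i j, θ i * θ j = -(θ j * θ i)) (hθ0 : ∀ i, θ i * θ i = 0)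
    (ber : A →ₗ[ℂ] ℂ)
    (hber : ∀ (c : ℂ) (I : Finset (Fin (2 * n))),
      ber (c • gmonomial θ I) = if I = Finset.univ then c else 0)
    (a : A) (ha : a = (1 / 2 : ℂ) • ∑ i, ∑ j, M i j • (θ i * θ j)) :
    ber (∑ k ∈ Finset.range (n + 1), ((k.factorial : ℂ))⁻¹ • a ^ k) = pfaffian M :=
  gaussian_berezin_eq_pfaffian_general n M θ hθ ber hber a ha
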